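/- The stochastic structural operational semantics of the Brane Calculus is conservative with respect to the non-stochastic reduction semantics: for all systems P and Q, if P → μ and μ_id([Q]_≡) > 0, then P ⟶ Q is derivable in the reduction semantics. -/

import Mathlib

open MeasureTheory
open scoped ENNReal

namespace Brane

/-- Action names Λ (a countable set). -/
abbrev Name := ℕ
/-- Node names (for compartments), a countable set disjoint from Λ. -/
abbrev NName := ℕ

/-- Membranes of the Brane Calculus. -/
inductive Membrane : Type
  | zero : Membrane
  | par : Membrane → Membrane → Membrane
  | phago : Name → Membrane → Membrane
  | cophago : Name → Membrane → Membrane → Membrane  -- cophago n τ σ = ⊥phago_n(τ).σ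
  | exo : Name → Membrane → Membrane
  | coexo : Name → Membrane → Membrane
  | pino : Name → Membrane → Membrane → Membrane     -- pino n τ σ = pino_n(τ).σ
deriving DecidableEq

/-- Systems of the Brane Calculus. -/
inductive System : Type
  | void : System
  | comp : System → System → System
  | cell : Membrane → System → System
deriving DecidableEq

/-- Structural congruence on membranes. -/
inductive MCong : Membrane → Membrane → Prop
  | refl (σ) : MCong σ σ
  | symm {σ τ} : MCong σ τ → MCong τ σ
  | trans {σ τ ρ} : MCong σ τ → MCong τ ρ → MCong σ ρ
  | parComm (σ τ) : MCong (Membrane.par σ τ) (Membrane.par τ σ)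
  | parAssoc (σ τ ρ) : MCong (Membrane.par σ (Membrane.par τ ρ)) (Membrane.par (Membrane.par σ τ) ρ)
  | parZero (σ) : MCong (Membrane.par σ .zero) σ
  | par {σ τ} (ρ) : MCong σ τ → MCong (Membrane.par σ ρ) (Membrane.par τ ρ)
  | phago (n) {σ τ} : MCong σ τ → MCong (.phago n σ) (.phago n τ)
  | exo (n) {σ τ} : MCong σ τ → MCong (.exo n σ) (.exo n τ)
  | coexo (n) {σ τ} : MCong σ τ → MCong (.coexo n σ) (.coexo n τ)
  | cophago (n) {ρ ν σ τ} : MCong ρ ν → MCong σ τ → MCong (.cophago n ρ σ) (.cophago n ν τ)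
  | pino (n) {ρ ν σ τ} : MCong ρ ν → MCong σ τ → MCong (.pino n ρ σ) (.pino n ν τ)

/-- Structural congruence on systems. -/
inductive SCong : System → System → Prop
  | refl (P) : SCong P P
  | symm {P Q} : SCong P Q → SCong Q P
  | trans {P Q R} : SCong P Q → SCong Q R → SCong P R
  | compComm (P Q) : SCong (System.comp P Q) (System.comp Q P)
  | compAssoc (P Q R) : SCong (System.comp P (System.comp Q R)) (System.comp (System.comp P Q) R)
  | compVoid (P) : SCong (System.comp P .void) P
  | zeroVoid : SCong (System.cell .zero .void) .void
  | comp {P Q} (R) : SCong P Q → SCong (System.comp P R) (System.comp Q R)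
  | cell {σ τ P Q} : MCong σ τ → SCong P Q → SCong (.cell σ P) (.cell τ Q)

/-- ≡-equivalence class of a membrane. -/
def mcls (σ : Membrane) : Set Membrane := {τ | MCong σ τ}
/-- ≡-equivalence class of a system. -/
def scls (P : System) : Set System := {Q | SCong P Q}

/-- The σ-algebra Π on membranes, generated by the ≡-classes. -/
instance : MeasurableSpace Membrane := .generateFrom {S | ∃ σ, S = mcls σ}
/-- The σ-algebra Π on systems, generated by the ≡-classes. -/
instance : MeasurableSpace System := .generateFrom {S | ∃ P, S = scls P}

/-- The reduction relation of the Brane Calculus. -/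
inductive React : System → System → Prop
  | phago {n ρ τ τ₀ σ σ₀ P Q} :
      React (.comp (.cell ((Membrane.cophago n ρ τ).par τ₀) Q)
                   (.cell ((Membrane.phago n σ).par σ₀) P))
            (.cell (Membrane.par τ τ₀) (.comp (.cell ρ (.cell (Membrane.par σ σ₀) P)) Q))
  | exo {n τ τ₀ σ σ₀ P Q} :
      React (.cell ((Membrane.coexo n τ).par τ₀)
                   (.comp (.cell ((Membrane.exo n σ).par σ₀) P) Q))
            (.comp (.cell (Membrane.par (Membrane.par σ σ₀) (Membrane.par τ τ₀)) Q) P)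
  | pino {n ρ σ σ₀ P} :
      React (.cell ((Membrane.pino n ρ σ).par σ₀) P)
            (.cell (Membrane.par σ σ₀) (.comp (.cell ρ .void) P))
  | loc {P Q} (σ) : React P Q → React (.cell σ P) (.cell σ Q)
  | comp {P Q} (R) : React P Q → React (.comp P R) (.comp Q R)
  | equiv {P P' Q Q'} : SCong P P' → React P' Q' → SCong Q' Q → React P Q

/-- Membrane action labels A_mem. -/
inductive MLabel : Type
  | phago : Name → MLabel
  | exo : Name → MLabel
  | coexo : Name → MLabel
  | cophago : Name → MLabel
  | pino : Name → MLabel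
deriving DecidableEq

/-- System action labels A_sys. -/
inductive SLabel : Type
  | id : SLabel
  | ph : Name → SLabel
  | phB : Name → SLabel
  | ex : Name → SLabel
deriving DecidableEq

/-- Target (product) space of a membrane label, according to its arity. -/
def MLabel.T : MLabel → Type
  | .phago _ => Membrane
  | .exo _ => Membrane
  | .coexo _ => Membrane
  | .cophago _ => Membrane × Membrane
  | .pino _ => Membrane × Membrane

/-- Target (product) space of a system label, according to its arity. -/
def SLabel.T : SLabel → Type
  | .id => System
  | .ph _ => System × System
  | .phB _ => Membrane × Membrane × System × System
  | .ex _ => Membrane × System × System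

instance (a : MLabel) : MeasurableSpace a.T := by
  cases a <;> (dsimp [MLabel.T]; infer_instance)

instance (a : SLabel) : MeasurableSpace a.T := by
  cases a <;> (dsimp [SLabel.T]; infer_instance)

/-- A_mem-indexed families of measures Δ^{A_mem}(B,Π). -/
abbrev MMeas := ∀ a : MLabel, Measure a.T
/-- A_sys-indexed families of measures Δ^{A_sys}(B,Π). -/
abbrev SMeas := ∀ a : SLabel, Measure a.T

/-- Prefix constant [phago_n]_σ. -/
noncomputable def phagoMeas (ι : Name → ℝ≥0∞) (n : Name) (σ : Membrane) : MMeas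
  | .phago m => if n = m then ι n • Measure.dirac σ else 0
  | .exo _ => 0
  | .coexo _ => 0
  | .cophago _ => 0
  | .pino _ => 0

/-- Prefix constant [exo_n]_σ. -/
noncomputable def exoMeas (ι : Name → ℝ≥0∞) (n : Name) (σ : Membrane) : MMeas
  | .exo m => if n = m then ι n • Measure.dirac σ else 0
  | .phago _ => 0
  | .coexo _ => 0
  | .cophago _ => 0
  | .pino _ => 0

/-- Prefix constant [coexo_n]_σ. -/
noncomputable def coexoMeas (ι : Name → ℝ≥0∞) (n : Name) (σ : Membrane) : MMeas
  | .coexo m => if n = m then ι n • Measure.dirac σ else 0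
  | .phago _ => 0
  | .exo _ => 0
  | .cophago _ => 0
  | .pino _ => 0

/-- Prefix constant [cophago_n]_σ^τ. -/
noncomputable def cophagoMeas (ι : Name → ℝ≥0∞) (n : Name) (τ σ : Membrane) : MMeas
  | .cophago m => if n = m then ι n • Measure.dirac (σ, τ) else 0
  | .phago _ => 0
  | .exo _ => 0
  | .coexo _ => 0
  | .pino _ => 0

/-- Prefix constant [pino_n]_σ^τ. -/
noncomputable def pinoMeas (ι : Name → ℝ≥0∞) (n : Name) (τ σ : Membrane) : MMeas
  | .pino m => if n = m then ι n • Measure.dirac (σ, τ) else 0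
  | .phago _ => 0
  | .exo _ => 0
  | .coexo _ => 0
  | .cophago _ => 0

/-- The parallel operator μ ⊕_{σ,τ} μ' on A_mem-indexed families of measures. -/
noncomputable def mpar (μ μ' : MMeas) (σ τ : Membrane) : MMeas
  | .phago n => (μ (.phago n)).map (fun ρ => ρ.par τ) + (μ' (.phago n)).map (fun ρ => ρ.par σ)
  | .exo n => (μ (.exo n)).map (fun ρ => ρ.par τ) + (μ' (.exo n)).map (fun ρ => ρ.par σ)
  | .coexo n => (μ (.coexo n)).map (fun ρ => ρ.par τ) + (μ' (.coexo n)).map (fun ρ => ρ.par σ)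
  | .cophago n =>
      (μ (.cophago n)).map (fun p : Membrane × Membrane => (p.1.par τ, p.2)) +
      (μ' (.cophago n)).map (fun p : Membrane × Membrane => (p.1.par σ, p.2))
  | .pino n =>
      (μ (.pino n)).map (fun p : Membrane × Membrane => (p.1.par τ, p.2)) +
      (μ' (.pino n)).map (fun p : Membrane × Membrane => (p.1.par σ, p.2))

/-- The nesting operator μ ▹_{σ,P} ν on families of measures. -/
noncomputable def mnest (ι : Name → ℝ≥0∞) (μ : SMeas) (ν : MMeas) (σ : Membrane) (P : System) :
    SMeas
  | .ph n => (ν (.phago n) (mcls σ)) • Measure.dirac (System.cell σ P, System.void)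
  | .phB n =>
      ((ν (.cophago n)).prod (Measure.dirac (P, System.void))).map MeasurableEquiv.prodAssoc
  | .ex n => (ν (.exo n)).prod (Measure.dirac (P, System.void))
  | .id =>
      (μ .id).map (fun Q => System.cell σ Q) +
      Measure.sum (fun n : Name =>
        (ν (.pino n)).map (fun p : Membrane × Membrane =>
          System.cell p.1 ((System.cell p.2 System.void).comp P))) +
      Measure.sum (fun n : Name =>
        (ι n)⁻¹ •
          (((μ (.ex n)).prod (ν (.coexo n))).map
            (fun q : (Membrane × System × System) × Membrane =>
              (System.cell (q.1.1.par q.2) q.1.2.2).comp q.1.2.1)))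

/-- The composition operator μ ⊗_{P,Q} μ' on families of measures. -/
noncomputable def mcomp (ι : Name → ℝ≥0∞) (μ μ' : SMeas) (P Q : System) : SMeas
  | .ph n =>
      (μ (.ph n)).map (fun p : System × System => (p.1, p.2.comp Q)) +
      (μ' (.ph n)).map (fun p : System × System => (p.1, p.2.comp P))
  | .phB n =>
      (μ (.phB n)).map
        (fun p : Membrane × Membrane × System × System => (p.1, p.2.1, p.2.2.1, p.2.2.2.comp Q)) +
      (μ' (.phB n)).map
        (fun p : Membrane × Membrane × System × System => (p.1, p.2.1, p.2.2.1, p.2.2.2.comp P))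
  | .ex n =>
      (μ (.ex n)).map (fun p : Membrane × System × System => (p.1, p.2.1, p.2.2.comp Q)) +
      (μ' (.ex n)).map (fun p : Membrane × System × System => (p.1, p.2.1, p.2.2.comp P))
  | .id =>
      (μ .id).map (fun R => R.comp Q) + (μ' .id).map (fun R => R.comp P) +
      Measure.sum (fun n : Name =>
        (ι n)⁻¹ •
          (((μ (.ph n)).prod (μ' (.phB n))).map
            (fun q : (System × System) × (Membrane × Membrane × System × System) =>
              (System.cell q.2.1 ((System.cell q.2.2.1 q.1.1).comp q.2.2.2.1)).comp
                (q.1.2.comp q.2.2.2.2)))) +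
      Measure.sum (fun n : Name =>
        (ι n)⁻¹ •
          (((μ (.phB n)).prod (μ' (.ph n))).map
            (fun q : (Membrane × Membrane × System × System) × (System × System) =>
              (System.cell q.1.1 ((System.cell q.1.2.1 q.2.1).comp q.1.2.2.1)).comp
                (q.1.2.2.2.comp q.2.2))))

/-- The stochastic transition relation σ →_mem μ, given by the SOS rules
(zero), (pref), (pref-arg), (par). -/
inductive MTrans (ι : Name → ℝ≥0∞) : Membrane → MMeas → Prop
  | zero : MTrans ι .zero 0
  | phago {n σ} : MTrans ι (.phago n σ) (phagoMeas ι n σ)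
  | exo {n σ} : MTrans ι (.exo n σ) (exoMeas ι n σ)
  | coexo {n σ} : MTrans ι (.coexo n σ) (coexoMeas ι n σ)
  | cophago {n τ σ} : MTrans ι (.cophago n τ σ) (cophagoMeas ι n τ σ)
  | pino {n τ σ} : MTrans ι (.pino n τ σ) (pinoMeas ι n τ σ)
  | par {σ τ μ μ'} : MTrans ι σ μ → MTrans ι τ μ' → MTrans ι (Membrane.par σ τ) (mpar μ μ' σ τ)

/-- The stochastic transition relation P →_sys μ, given by the SOS rules
(void), (loc), (comp). -/
inductive STrans (ι : Name → ℝ≥0∞) : System → SMeas → Prop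
  | void : STrans ι .void 0
  | cell {σ P ν μ} : MTrans ι σ ν → STrans ι P μ → STrans ι (.cell σ P) (mnest ι μ ν σ P)
  | comp {P Q μ μ'} : STrans ι P μ → STrans ι Q μ' → STrans ι (System.comp P Q) (mcomp ι μ μ' P Q)

end Brane
namespace Brane

/-! ### Normal forms -/

/-- Compose `n` copies of `C` in front of `R`. -/
def prependCopies : ℕ → System → System → System
  | 0, _, R => R
  | n + 1, C, R => System.comp C (prependCopies n C R)

/-- `n` copies of `C` composed in parallel. -/
def copies (n : ℕ) (C : System) : System := prependCopies n C .void

/-- Systems in normal form: n₁·σ₁(|Q₁|) ∘ … ∘ n_k·σ_k(|Q_k|). -/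
inductive NF : Type
  | nil : NF
  | cons (n : ℕ) (σ : Membrane) (inner rest : NF) : NF

/-- Unfolding ⌈Q⌉ of a normal form into a system. -/
def NF.unfold : NF → System
  | .nil => .void
  | .cons n σ Q₁ Q₂ => prependCopies n (System.cell σ Q₁.unfold) Q₂.unfold

/-- The list of top-level cells of a normal form. -/
def NF.cellsList : NF → List (Membrane × NF)
  | .nil => []
  | .cons _ σ Q₁ Q₂ => (σ, Q₁) :: Q₂.cellsList

/-- Well-formedness of normal forms: positive multiplicities, subsystems in
normal form, and pairwise non-congruent top-level cells. -/
inductive NF.Good : NF → Prop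
  | nil : Good .nil
  | cons {n σ Q₁ Q₂} : 0 < n → Good Q₁ → Good Q₂ →
      (∀ p ∈ Q₂.cellsList, ¬ SCong (System.cell σ Q₁.unfold) (System.cell p.1 p.2.unfold)) →
      Good (.cons n σ Q₁ Q₂)

/-! ### Species -/

/-- Actions (prefix-headed membranes). -/
inductive Action : Type
  | phago : Name → Membrane → Action
  | cophago : Name → Membrane → Membrane → Action
  | exo : Name → Membrane → Action
  | coexo : Name → Membrane → Action
  | pino : Name → Membrane → Membrane → Action
deriving DecidableEq

/-- The membrane denoted by an action. -/
def Action.toMem : Action → Membrane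
  | .phago n σ => .phago n σ
  | .cophago n ρ σ => .cophago n ρ σ
  | .exo n σ => .exo n σ
  | .coexo n σ => .coexo n σ
  | .pino n ρ σ => .pino n ρ σ

/-- A species C(|^x_y|) : a complex located in compartment x with inner compartment y. -/
structure Species : Type where
  C : Finset Action
  x : NName
  y : NName
deriving DecidableEq

/-- Populations: finite multisets of species. -/
abbrev Population := Species →₀ ℕ

/-- Node names occurring in a population. -/
def pfnPop (S : Population) : Finset NName := S.support.biUnion fun I => {I.x, I.y}

/-- The function s(·) mapping a membrane to a complex. -/
def complexOf : Membrane → Finset Action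
  | .zero => ∅
  | .par σ τ => complexOf σ ∪ complexOf τ
  | .phago n σ => {Action.phago n σ}
  | .cophago n ρ σ => {Action.cophago n ρ σ}
  | .exo n σ => {Action.exo n σ}
  | .coexo n σ => {Action.coexo n σ}
  | .pino n ρ σ => {Action.pino n ρ σ}

/-- The translation species_{E,x}(Q) of a normal form into a species population
(relational because of the choice of fresh names). -/
inductive NFSpecies : Finset NName → NName → NF → Population → Prop
  | nil {E x} : NFSpecies E x .nil 0
  | cons {E : Finset NName} {x : NName} {n σ Q₁ Q₂ y J₁ J₂} :
      y ∉ E →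
      NFSpecies (insert y E) y Q₁ J₁ →
      NFSpecies E x Q₂ J₂ →
      (pfnPop J₁ ∩ pfnPop J₂ ⊆ {x}) →
      NFSpecies E x (.cons n σ Q₁ Q₂)
        (Finsupp.single ⟨complexOf σ, x, y⟩ n + J₁ + J₂)

/-- species_{∅,x}(P): translation of a system `P` (via a normal form of `P`)
into a species population located at `x`. -/
def SpeciesOfSys (x : NName) (P : System) (J : Population) : Prop :=
  ∃ Q : NF, NF.Good Q ∧ SCong Q.unfold P ∧ NFSpecies {x} x Q J

/-- A root name of a species population. -/
def IsRoot (S : Population) (x : NName) : Prop :=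
  (∃ I ∈ S.support, I.x = x) ∧ ∀ I ∈ S.support, I.y ≠ x

/-! ### Decoding -/

/-- Decoding ⟪C⟫ of a complex into a membrane. -/
noncomputable def decodeComplex (C : Finset Action) : Membrane :=
  (C.toList.map Action.toMem).foldr Membrane.par .zero

/-- The species of `S` located at `x`. -/
def speciesAt (S : Population) (x : NName) : Finset Species :=
  S.support.filter fun I => I.x = x

mutual
/-- Decoding ⟪S⟫_x of a species population into a system (relational; it is
defined exactly when the nesting structure of `S` below `x` is well founded). -/
inductive Decodes : Population → NName → System → Prop
  | mk {S : Population} {x : NName} {l : List Species} {P : System} :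
      l.Perm (speciesAt S x).toList → DecList S l P → Decodes S x P

/-- Decoding of a list of species (one top-level compartment each). -/
inductive DecList : Population → List Species → System → Prop
  | nil {S} : DecList S [] .void
  | cons {S : Population} {I : Species} {l : List Species} {P' Q : System} :
      Decodes S I.y P' → DecList S l Q →
      DecList S (I :: l)
        (System.comp (copies (S I) (System.cell (decodeComplex I.C) P')) Q)
end

end Brane
namespace Brane

/-! ### The COW Generic Stochastic Abstract Machine (Brane Calculus instance) -/

/-- A reaction O = (S₁, r, f, S₂); the global update function f is, in the Brane
Calculus instantiation, either the identity (`none`) or a substitution of node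
names T[w := x] (`some (w, x)`). -/
structure Reaction : Type where
  reac : Population
  rate : ℝ≥0∞
  upd : Option (NName × NName)
  prod : Population

/-- An activity: the scheduled time t' and the propensity a of a reaction. -/
abbrev Activity := ℝ × ℝ≥0∞

/-- The reaction map R, associating activities to reactions. -/
abbrev RMap := List (Reaction × Activity)

/-- A machine term E ⊢ (t, S, R). -/
structure MachTerm : Type where
  env : Finset NName
  time : ℝ
  pop : Population
  rxns : RMap

/-- A machine state (t, S, R). -/
abbrev MState := ℝ × Population × RMap

/-- S*(I): population of a species multiplied along the chain of enclosing
compartments up to the root. -/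
inductive StarPop (S : Population) : Species → ℕ → Prop
  | root {I} : (∀ J ∈ S.support, J.y ≠ I.x) → StarPop S I (S I)
  | step {I J m} : J ∈ S.support → J.y = I.x → StarPop S J m → StarPop S I (S I * m)

/-- The mass-action propensity of a reaction in population `S`. -/
def PropensityIs (O : Reaction) (S : Population) (a : ℝ≥0∞) : Prop :=
  ∃ g : Species → ℕ,
    (∀ I ∈ O.reac.support, StarPop S I (g I)) ∧
    a = O.rate * ∏ I ∈ O.reac.support, ((g I).choose (O.reac I) : ℝ≥0∞)

/-- init(L,(t,S,R)): schedule each reaction of `L` with its propensity in `S`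
and a stochastic delay. -/
def InitRel (t : ℝ) (S : Population) (L : List Reaction) (out : RMap) : Prop :=
  List.Forall₂
    (fun O q => q.1 = O ∧ PropensityIs O S q.2.2 ∧ ∃ d : ℝ, 0 ≤ d ∧ q.2.1 = t + d) L out

/-- updates(I,(t,S,R)): recompute the activities of the reactions involving `I`. -/
def UpdatesSpec (Iu : Species) (t : ℝ) (S : Population) (R out : RMap) : Prop :=
  List.Forall₂
    (fun p q => q.1 = p.1 ∧ PropensityIs p.1 S q.2.2 ∧
      (if t < p.2.1 then q.2.1 = t + ((p.2.2 / q.2.2).toReal) * (p.2.1 - t)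
       else ∃ d : ℝ, 0 ≤ d ∧ q.2.1 = t + d))
    (R.filter fun p => decide (0 < p.1.reac Iu)) out

open Classical in
/-- Right-biased union R ∪ R' of reaction maps. -/
noncomputable def override (R R' : RMap) : RMap :=
  R' ++ R.filter fun p => decide (∀ q ∈ R', q.1 ≠ p.1)

/-- The reactions of the Brane Calculus instantiation: unary pinocytosis and
binary exocytosis/phagocytosis reactions of the (new) species `I₁` against the
population `S`, with rates given by ι. -/
inductive ReactionOf (ι : Name → ℝ≥0∞) (E : Finset NName) (I₁ : Species) (S : Population) :
    Reaction → Prop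
  | pino {n ρ σ w} :
      Action.pino n ρ σ ∈ I₁.C → w ∉ E →
      ReactionOf ι E I₁ S
        ⟨Finsupp.single I₁ 1, ι n, none,
          Finsupp.single ⟨complexOf σ ∪ I₁.C.erase (.pino n ρ σ), I₁.x, I₁.y⟩ 1 +
          Finsupp.single ⟨complexOf ρ, I₁.y, w⟩ 1⟩
  | exoUp {n τ σ I₂} :
      I₂ ∈ S.support → Action.coexo n τ ∈ I₁.C → Action.exo n σ ∈ I₂.C → I₂.x = I₁.y →
      ReactionOf ι E I₁ S
        ⟨Finsupp.single I₁ 1 + Finsupp.single I₂ 1, ι n, some (I₂.y, I₁.x),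
          Finsupp.single
            ⟨(complexOf τ ∪ I₁.C.erase (.coexo n τ)) ∪ (complexOf σ ∪ I₂.C.erase (.exo n σ)),
              I₁.x, I₁.y⟩ 1⟩
  | exoDown {n τ σ I₂} :
      I₂ ∈ S.support → Action.coexo n τ ∈ I₂.C → Action.exo n σ ∈ I₁.C → I₁.x = I₂.y →
      ReactionOf ι E I₁ S
        ⟨Finsupp.single I₁ 1 + Finsupp.single I₂ 1, ι n, some (I₁.y, I₂.x),
          Finsupp.single
            ⟨(complexOf τ ∪ I₂.C.erase (.coexo n τ)) ∪ (complexOf σ ∪ I₁.C.erase (.exo n σ)),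
              I₂.x, I₂.y⟩ 1⟩
  | phagoL {n ρ τ σ I₂ w} :
      I₂ ∈ S.support → Action.cophago n ρ τ ∈ I₁.C → Action.phago n σ ∈ I₂.C →
      I₂.x = I₁.x → w ∉ E →
      ReactionOf ι E I₁ S
        ⟨Finsupp.single I₁ 1 + Finsupp.single I₂ 1, ι n, none,
          Finsupp.single ⟨complexOf τ ∪ I₁.C.erase (.cophago n ρ τ), I₁.x, I₁.y⟩ 1 +
          Finsupp.single ⟨complexOf ρ, I₁.y, w⟩ 1 +
          Finsupp.single ⟨complexOf σ ∪ I₂.C.erase (.phago n σ), w, I₂.y⟩ 1⟩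
  | phagoR {n ρ τ σ I₂ w} :
      I₂ ∈ S.support → Action.cophago n ρ τ ∈ I₂.C → Action.phago n σ ∈ I₁.C →
      I₂.x = I₁.x → w ∉ E →
      ReactionOf ι E I₁ S
        ⟨Finsupp.single I₁ 1 + Finsupp.single I₂ 1, ι n, none,
          Finsupp.single ⟨complexOf τ ∪ I₂.C.erase (.cophago n ρ τ), I₂.x, I₂.y⟩ 1 +
          Finsupp.single ⟨complexOf ρ, I₂.y, w⟩ 1 +
          Finsupp.single ⟨complexOf σ ∪ I₁.C.erase (.phago n σ), w, I₁.y⟩ 1⟩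

/-- `L` is (a representative listing of) reactions(I ↦ i, S). -/
def ReactionsSpec (ι : Name → ℝ≥0∞) (E : Finset NName) (I : Species) (S : Population)
    (L : List Reaction) : Prop :=
  (∀ O ∈ L, ReactionOf ι E I S O) ∧
  (∀ O, ReactionOf ι E I S O → ∃ O' ∈ L, O'.reac = O.reac ∧ O'.rate = O.rate)

/-- The operation I ↦ i ⊕ (t, S, R). -/
inductive OPlusOne (ι : Name → ℝ≥0∞) (E : Finset NName) : Species → ℕ → MState → MState → Prop
  | old {I : Species} {i : ℕ} {t S R out} :
      I ∈ S.support →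
      UpdatesSpec I t (S + Finsupp.single I i) R out →
      OPlusOne ι E I i (t, S, R) (t, S + Finsupp.single I i, override R out)
  | new {I : Species} {i : ℕ} {t S R L out} :
      I ∉ S.support →
      ReactionsSpec ι E I S L →
      InitRel t (S + Finsupp.single I i) L out →
      OPlusOne ι E I i (t, S, R) (t, S + Finsupp.single I i, R ++ out)

/-- The operation (t, S, R) ⊖ I ↦ i. -/
inductive OMinusOne : Species → ℕ → MState → MState → Prop
  | mk {I : Species} {i : ℕ} {t S R out} :
      i ≤ S I →
      UpdatesSpec I t (Finsupp.update S I (S I - i)) R out →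
      OMinusOne I i (t, S, R) (t, Finsupp.update S I (S I - i), override R out)

/-- Iterated ⊕ of a population listed as (species, multiplicity) pairs. -/
inductive OPlusStar (ι : Name → ℝ≥0∞) (E : Finset NName) :
    List (Species × ℕ) → MState → MState → Prop
  | nil {st} : OPlusStar ι E [] st st
  | cons {I i l st st' st''} :
      OPlusOne ι E I i st st' → OPlusStar ι E l st' st'' →
      OPlusStar ι E ((I, i) :: l) st st''

/-- Iterated ⊖ of a population listed as (species, multiplicity) pairs. -/
inductive OMinusStar : List (Species × ℕ) → MState → MState → Prop
  | nil {st} : OMinusStar [] st st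
  | cons {I i l st st' st''} :
      OMinusOne I i st st' → OMinusStar l st' st'' →
      OMinusStar ((I, i) :: l) st st''

/-- List the species of a population together with their multiplicities. -/
noncomputable def popToList (S : Population) : List (Species × ℕ) :=
  S.support.toList.map fun I => (I, S I)

/-- `Reach S x z`: compartment `z` is (hereditarily) nested inside compartment `x`. -/
inductive Reach (S : Population) : NName → NName → Prop
  | refl (x) : Reach S x x
  | step {x : NName} {I : Species} : Reach S x I.x → I ∈ S.support → Reach S x I.y

open Classical in
/-- The copy (under the renaming `g`) of the subtree of `S` rooted at `y`. -/
noncomputable def copySub (g : NName → NName) (S : Population) (y : NName) : Population :=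
  S.sum fun I n => if Reach S y I.x then Finsupp.single ⟨I.C, g I.x, g I.y⟩ n else 0

/-- dup(E ⊢ (t,S,R), y, y'): deep duplication of the subtree rooted at `y` as a
new subtree rooted at `y'`, initializing the reactions of the new species. -/
def DupRel (ι : Name → ℝ≥0∞) (E : Finset NName) (t : ℝ) (S : Population) (R : RMap)
    (y y' : NName) (E' : Finset NName) (S' : Population) (R' : RMap) : Prop :=
  ∃ g : NName → NName,
    g y = y' ∧
    (∀ z, Reach S y z → z ≠ y → g z ∉ E) ∧
    (∀ z w, Reach S y z → Reach S y w → g z = g w → z = w) ∧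
    S' = S + copySub g S y ∧
    E' = E ∪ pfnPop S' ∧
    ∃ L out,
      (∀ O ∈ L, ∃ I ∈ (copySub g S y).support, ReactionOf ι E' I S' O) ∧
      (∀ I ∈ (copySub g S y).support, ∀ O, ReactionOf ι E' I S' O →
        ∃ O' ∈ L, O'.reac = O.reac ∧ O'.rate = O.rate) ∧
      InitRel t S' L out ∧ R' = R ++ out

/-- Split the multiplicity of the species `I`, keeping `keep` instances with the
old inner name and giving the remaining instances a fresh inner name, and deep
copy the tree hanging below `I` for the new instances. -/
def SplitCopy (ι : Name → ℝ≥0∞) (m : MachTerm) (I : Species) (keep : ℕ) (fresh : NName)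
    (m' : MachTerm) : Prop :=
  fresh ∉ m.env ∧
  ∃ S₀ E' S' R',
    S₀ = Finsupp.update m.pop I keep + Finsupp.single ⟨I.C, I.x, fresh⟩ (m.pop I - keep) ∧
    DupRel ι (insert fresh m.env) m.time S₀ m.rxns I.y fresh E' S' R' ∧
    ∃ L out,
      ReactionsSpec ι E' ⟨I.C, I.x, fresh⟩ S₀ L ∧
      InitRel m.time S' L out ∧
      m' = ⟨E', m.time, S', R' ++ out⟩

/-- The parent-unfolding step of cow: if the compartment `y` lies inside a
compartment with multiplicity > 1, split off a private copy of the parent. -/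
def ParentSplit (ι : Name → ℝ≥0∞) (m : MachTerm) (y : NName) (m' : MachTerm) : Prop :=
  ((∀ Ip ∈ m.pop.support, Ip.y = y → m.pop Ip ≤ 1) ∧ m' = m) ∨
  (∃ Ip ∈ m.pop.support, Ip.y = y ∧ 1 < m.pop Ip ∧ ∃ y', SplitCopy ι m Ip 1 y' m')

/-- The cow step for a single reactant species `I` with multiplicity `j`. -/
def CowStep (ι : Name → ℝ≥0∞) (m : MachTerm) (Ij : Species × ℕ) (m' : MachTerm) : Prop :=
  ∃ m₁, ParentSplit ι m Ij.1.x m₁ ∧ ∃ z', SplitCopy ι m₁ Ij.1 Ij.2 z' m'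

/-- cow(E ⊢ (t,S,R), S₁): copy-on-write unfolding of all the compartments
occurring in the reactant population. -/
inductive CowRel (ι : Name → ℝ≥0∞) : MachTerm → List (Species × ℕ) → MachTerm → Prop
  | nil {m} : CowRel ι m [] m
  | cons {m Ij l m' m''} :
      CowStep ι m Ij m' → CowRel ι m' l m'' → CowRel ι m ((Ij.1, Ij.2) :: l) m''

/-- Apply a node-name substitution. -/
def rn : Option (NName × NName) → NName → NName
  | none, z => z
  | some (w, x), z => if z = w then x else z

def renSpecies (f : Option (NName × NName)) (I : Species) : Species :=
  ⟨I.C, rn f I.x, rn f I.y⟩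

noncomputable def renPop (f : Option (NName × NName)) (S : Population) : Population :=
  Finsupp.mapDomain (renSpecies f) S

noncomputable def renReaction (f : Option (NName × NName)) (O : Reaction) : Reaction :=
  ⟨renPop f O.reac, O.rate, O.upd, renPop f O.prod⟩

noncomputable def renRMap (f : Option (NName × NName)) (R : RMap) : RMap :=
  R.map fun p => (renReaction f p.1, p.2)

/-- Apply the global update function f of a reaction to a machine term. -/
noncomputable def applyUpd (f : Option (NName × NName)) (m : MachTerm) : MachTerm :=
  ⟨m.env.image (rn f), m.time, renPop f m.pop, renRMap f m.rxns⟩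

/-- The transition relation T →^{a,O} T' of the COWGSAM (with the Next Reaction
method and the identity normalization function). -/
inductive MachStep (ι : Name → ℝ≥0∞) : MachTerm → ℝ≥0∞ → Reaction → MachTerm → Prop
  | mk {m : MachTerm} {O : Reaction} {a : ℝ≥0∞} {t' : ℝ} {mc : MachTerm} {st₁ st₂ : MState} :
      (O, (t', a)) ∈ m.rxns →
      (∀ p ∈ m.rxns, t' ≤ p.2.1) →
      CowRel ι m (popToList O.reac) mc →
      OMinusStar (popToList O.reac) (t', mc.pop, mc.rxns) st₁ →
      OPlusStar ι mc.env (popToList O.prod) st₁ st₂ →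
      MachStep ι m a O
        (applyUpd O.upd ⟨mc.env ∪ pfnPop O.prod, st₂.1, st₂.2.1, st₂.2.2⟩)

/-- The initial machine term ⟦P⟧_x = fn(J) ⊢ J ⊕ (0, ∅, ∅), J = species_{∅,x}(P). -/
def InitMach (ι : Name → ℝ≥0∞) (x : NName) (P : System) (m : MachTerm) : Prop :=
  ∃ (J : Population) (st : MState),
    SpeciesOfSys x P J ∧
    OPlusStar ι (pfnPop J) (popToList J) (0, 0, []) st ∧
    m = ⟨pfnPop J, st.1, st.2.1, st.2.2⟩

end Brane

/-! Every component `μ a` of a stochastic transition `P → μ` is concentrated on the residuals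
that `P` leaves after an action with label `a`; for `a = id` these residuals are exactly the
reducts of `P`, so mass on `[Q]_≡` forces a reduct in `[Q]_≡`. This is an induction on the
derivation of `P → μ`, each SOS rule matching a reduction rule up to `≡`. The concentration
sets are `≡`-saturated, hence measurable, because terms form a countable type and `Π` is
generated by the `≡`-classes. -/

instance {α β : Type*} [Setoid α] [Setoid β] : Setoid (α × β) := Setoid.prod ‹_› ‹_›

namespace MeasureTheory

class MeasurableSetoidClass (α : Type*) [MeasurableSpace α] [Setoid α] : Prop where
  measurableSet_setOf_equiv : ∀ a : α, MeasurableSet {b | a ≈ b}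

open MeasurableSetoidClass

instance {α β : Type*} [MeasurableSpace α] [MeasurableSpace β] [Setoid α] [Setoid β]
    [MeasurableSetoidClass α] [MeasurableSetoidClass β] : MeasurableSetoidClass (α × β) :=
  ⟨fun p => (measurableSet_setOf_equiv p.1).prod (measurableSet_setOf_equiv p.2)⟩

theorem measurableSet_setOf_of_saturated {α : Type*} [MeasurableSpace α] [Setoid α]
    [MeasurableSetoidClass α] [Countable α] {p : α → Prop} (hp : ∀ a b, a ≈ b → p a → p b) :
    MeasurableSet {a | p a} := by
  have : {a | p a} = ⋃ a : {a // p a}, {b | a.1 ≈ b} := by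
    ext b
    simp only [Set.mem_ofPred_eq, Set.mem_iUnion]
    exact ⟨fun hb => ⟨⟨b, hb⟩, Setoid.refl b⟩, fun ⟨a, hab⟩ => hp _ _ hab a.2⟩
  rw [this]
  exact .iUnion fun a => measurableSet_setOf_equiv a.1

theorem ae_map_of_ae {α β : Type*} [MeasurableSpace α] [MeasurableSpace β] {μ : Measure α}
    {f : α → β} {p : β → Prop} (hp : MeasurableSet {y | p y}) (h : ∀ᵐ x ∂μ, p (f x)) :
    ∀ᵐ y ∂μ.map f, p y := by
  by_cases hf : AEMeasurable f μ
  · exact (ae_map_iff hf hp).2 h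
  · simp [Measure.map_of_not_aemeasurable hf]

theorem ae_map_add_map {α β : Type*} [MeasurableSpace α] [MeasurableSpace β] {μ ν : Measure α}
    {f g : α → β} {p : β → Prop} (hp : MeasurableSet {y | p y}) (hμ : ∀ᵐ x ∂μ, p (f x))
    (hν : ∀ᵐ x ∂ν, p (g x)) : ∀ᵐ y ∂μ.map f + ν.map g, p y :=
  ae_add_measure_iff.2 ⟨ae_map_of_ae hp hμ, ae_map_of_ae hp hν⟩

theorem ae_prod_of_ae_of_ae {α β : Type*} [MeasurableSpace α] [MeasurableSpace β]
    {μ : Measure α} {ν : Measure β} {p : α → Prop} {q : β → Prop} (hp : ∀ᵐ a ∂μ, p a)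
    (hq : ∀ᵐ b ∂ν, q b) : ∀ᵐ x ∂μ.prod ν, p x.1 ∧ q x.2 :=
  (Measure.quasiMeasurePreserving_fst.ae hp).and (Measure.quasiMeasurePreserving_snd.ae hq)

theorem ae_smul_dirac {α : Type*} [MeasurableSpace α] {p : α → Prop} {a : α}
    (hp : MeasurableSet {x | p x}) (ha : p a) (c : ℝ≥0∞) : ∀ᵐ x ∂c • Measure.dirac a, p x :=
  Measure.ae_smul_measure ((ae_dirac_iff hp).2 ha) c

theorem ae_dirac_equiv {α : Type*} [MeasurableSpace α] [Setoid α] [MeasurableSetoidClass α]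
    (a : α) : ∀ᵐ x ∂Measure.dirac a, a ≈ x :=
  (ae_dirac_iff (measurableSet_setOf_equiv a)).2 (Setoid.refl a)

end MeasureTheory

namespace Brane

def Membrane.enc : Membrane → ℕ
  | .zero => Nat.pair 0 0
  | .par a b => Nat.pair 1 (Nat.pair a.enc b.enc)
  | .phago n a => Nat.pair 2 (Nat.pair n a.enc)
  | .cophago n a b => Nat.pair 3 (Nat.pair n (Nat.pair a.enc b.enc))
  | .exo n a => Nat.pair 4 (Nat.pair n a.enc)
  | .coexo n a => Nat.pair 5 (Nat.pair n a.enc)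
  | .pino n a b => Nat.pair 6 (Nat.pair n (Nat.pair a.enc b.enc))

theorem Membrane.enc_injective : Function.Injective Membrane.enc := by
  intro a
  induction a <;> intro b h <;> cases b <;> simp only [Membrane.enc, Nat.pair_eq_pair] at h <;>
    grind

instance : Countable Membrane := Membrane.enc_injective.countable

def System.enc : System → ℕ
  | .void => Nat.pair 0 0
  | .comp a b => Nat.pair 1 (Nat.pair a.enc b.enc)
  | .cell m a => Nat.pair 2 (Nat.pair m.enc a.enc)

theorem System.enc_injective : Function.Injective System.enc := by
  intro a
  induction a <;> intro b h <;> cases b <;> simp only [System.enc, Nat.pair_eq_pair] at h <;>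
    grind [Membrane.enc_injective.eq_iff]

instance : Countable System := System.enc_injective.countable

theorem MCong.par_congr {σ σ' τ τ' : Membrane} (h₁ : MCong σ σ') (h₂ : MCong τ τ') :
    MCong (σ.par τ) (σ'.par τ') :=
  ((h₁.par τ).trans (.parComm σ' τ)).trans ((h₂.par σ').trans (.parComm τ' σ'))

theorem SCong.comp_congr {P P' Q Q' : System} (h₁ : SCong P P') (h₂ : SCong Q Q') :
    SCong (P.comp Q) (P'.comp Q') :=
  ((h₁.comp Q).trans (.compComm P' Q)).trans ((h₂.comp P').trans (.compComm Q' P'))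

theorem SCong.comp_comp_comp_comm (P Q R S : System) :
    SCong ((P.comp Q).comp (R.comp S)) ((P.comp R).comp (Q.comp S)) :=
  (SCong.compAssoc P Q (R.comp S)).symm.trans <| SCong.trans
    (SCong.comp_congr (.refl P) <| (SCong.compAssoc Q R S).trans <|
      ((SCong.compComm Q R).comp S).trans (SCong.compAssoc R Q S).symm)
    (SCong.compAssoc P R (Q.comp S))

instance : Setoid Membrane := ⟨MCong, ⟨.refl, .symm, .trans⟩⟩

instance : Setoid System := ⟨SCong, ⟨.refl, .symm, .trans⟩⟩

instance : MeasurableSetoidClass Membrane :=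
  ⟨fun σ => MeasurableSpace.measurableSet_generateFrom ⟨σ, rfl⟩⟩

instance : MeasurableSetoidClass System :=
  ⟨fun P => MeasurableSpace.measurableSet_generateFrom ⟨P, rfl⟩⟩

def PrefixRes (pre : Membrane → Membrane) (σ ρ : Membrane) : Prop :=
  ∃ s s₀, MCong σ ((pre s).par s₀) ∧ MCong ρ (s.par s₀)

/-- For the prefixes `cophago_n(r).s` and `pino_n(r).s`, with `pre r s` the prefixed membrane;
the pair records the continuation `s` (in parallel with the rest) and the argument `r`. -/
def PrefixRes₂ (pre : Membrane → Membrane → Membrane) (σ : Membrane)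
    (p : Membrane × Membrane) : Prop :=
  ∃ r, PrefixRes (pre r) σ p.1 ∧ MCong p.2 r

namespace PrefixRes

variable {pre : Membrane → Membrane} {σ τ ρ ρ' : Membrane}

theorem of_prefix (s : Membrane) : PrefixRes pre (pre s) s :=
  ⟨s, .zero, (MCong.parZero _).symm, (MCong.parZero _).symm⟩

theorem congr_right (h : PrefixRes pre σ ρ) (hρ : MCong ρ ρ') : PrefixRes pre σ ρ' :=
  let ⟨s, s₀, hσ, hρs⟩ := h
  ⟨s, s₀, hσ, hρ.symm.trans hρs⟩

theorem par_left (τ : Membrane) (h : PrefixRes pre σ ρ) :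
    PrefixRes pre (σ.par τ) (ρ.par τ) :=
  let ⟨s, s₀, hσ, hρ⟩ := h
  ⟨s, s₀.par τ, (hσ.par τ).trans (MCong.parAssoc _ _ _).symm,
    (hρ.par τ).trans (MCong.parAssoc _ _ _).symm⟩

theorem par_right (σ : Membrane) (h : PrefixRes pre τ ρ) :
    PrefixRes pre (σ.par τ) (ρ.par σ) :=
  let ⟨s, s₀, hτ, hρ⟩ := h.par_left σ
  ⟨s, s₀, (MCong.parComm σ τ).trans hτ, hρ⟩

theorem measurableSet (pre : Membrane → Membrane) (σ : Membrane) :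
    MeasurableSet {ρ | PrefixRes pre σ ρ} :=
  measurableSet_setOf_of_saturated fun _ _ hρ h => h.congr_right hρ

end PrefixRes

namespace PrefixRes₂

variable {pre : Membrane → Membrane → Membrane} {σ τ : Membrane} {p : Membrane × Membrane}

theorem of_prefix (r s : Membrane) : PrefixRes₂ pre (pre r s) (s, r) :=
  ⟨r, .of_prefix s, .refl r⟩

theorem par_left (τ : Membrane) (h : PrefixRes₂ pre σ p) :
    PrefixRes₂ pre (σ.par τ) (p.1.par τ, p.2) :=
  let ⟨r, hσ, hr⟩ := h
  ⟨r, hσ.par_left τ, hr⟩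

theorem par_right (σ : Membrane) (h : PrefixRes₂ pre τ p) :
    PrefixRes₂ pre (σ.par τ) (p.1.par σ, p.2) :=
  let ⟨r, hτ, hr⟩ := h
  ⟨r, hτ.par_right σ, hr⟩

theorem measurableSet (pre : Membrane → Membrane → Membrane) (σ : Membrane) :
    MeasurableSet {p | PrefixRes₂ pre σ p} :=
  measurableSet_setOf_of_saturated fun _ _ (h : MCong _ _ ∧ MCong _ _) ⟨r, hσ, hr⟩ =>
    ⟨r, hσ.congr_right h.1, h.2.symm.trans hr⟩

end PrefixRes₂

namespace MTrans

variable {ι : Name → ℝ≥0∞} {σ : Membrane} {ν : MMeas}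

-- The bound variable is typed by the label's target space, not by the defeq `Membrane`:
-- otherwise `ae` lives on another type than the measure and the SOS equations do not rewrite.
theorem ae_phago (h : MTrans ι σ ν) (n : Name) :
    ∀ᵐ (ρ : (MLabel.phago n).T) ∂ν (.phago n), PrefixRes (.phago n) σ ρ := by
  induction h with
  | @phago m s =>
    rcases eq_or_ne m n with rfl | hmn
    · simp only [phagoMeas, ↓reduceIte]
      exact ae_smul_dirac (PrefixRes.measurableSet _ _) (.of_prefix s) _
    · simp only [phagoMeas, hmn]
      exact ae_iff.2 rfl
  | @par σ τ _ _ _ _ ih₁ ih₂ =>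
    exact ae_map_add_map (PrefixRes.measurableSet _ _) (ih₁.mono fun _ => .par_left τ)
      (ih₂.mono fun _ => .par_right σ)
  | zero => exact ae_iff.2 rfl
  | _ => simp only [exoMeas, coexoMeas, cophagoMeas, pinoMeas]; exact ae_iff.2 rfl

theorem ae_exo (h : MTrans ι σ ν) (n : Name) :
    ∀ᵐ (ρ : (MLabel.exo n).T) ∂ν (.exo n), PrefixRes (.exo n) σ ρ := by
  induction h with
  | @exo m s =>
    rcases eq_or_ne m n with rfl | hmn
    · simp only [exoMeas, ↓reduceIte]
      exact ae_smul_dirac (PrefixRes.measurableSet _ _) (.of_prefix s) _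
    · simp only [exoMeas, hmn]
      exact ae_iff.2 rfl
  | @par σ τ _ _ _ _ ih₁ ih₂ =>
    exact ae_map_add_map (PrefixRes.measurableSet _ _) (ih₁.mono fun _ => .par_left τ)
      (ih₂.mono fun _ => .par_right σ)
  | zero => exact ae_iff.2 rfl
  | _ => simp only [phagoMeas, coexoMeas, cophagoMeas, pinoMeas]; exact ae_iff.2 rfl

theorem ae_coexo (h : MTrans ι σ ν) (n : Name) :
    ∀ᵐ (ρ : (MLabel.coexo n).T) ∂ν (.coexo n), PrefixRes (.coexo n) σ ρ := by
  induction h with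
  | @coexo m s =>
    rcases eq_or_ne m n with rfl | hmn
    · simp only [coexoMeas, ↓reduceIte]
      exact ae_smul_dirac (PrefixRes.measurableSet _ _) (.of_prefix s) _
    · simp only [coexoMeas, hmn]
      exact ae_iff.2 rfl
  | @par σ τ _ _ _ _ ih₁ ih₂ =>
    exact ae_map_add_map (PrefixRes.measurableSet _ _) (ih₁.mono fun _ => .par_left τ)
      (ih₂.mono fun _ => .par_right σ)
  | zero => exact ae_iff.2 rfl
  | _ => simp only [phagoMeas, exoMeas, cophagoMeas, pinoMeas]; exact ae_iff.2 rfl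

theorem ae_cophago (h : MTrans ι σ ν) (n : Name) :
    ∀ᵐ (p : (MLabel.cophago n).T) ∂ν (.cophago n), PrefixRes₂ (.cophago n) σ p := by
  induction h with
  | @cophago m r s =>
    rcases eq_or_ne m n with rfl | hmn
    · simp only [cophagoMeas, ↓reduceIte]
      exact ae_smul_dirac (PrefixRes₂.measurableSet _ _) (.of_prefix r s) _
    · simp only [cophagoMeas, hmn]
      exact ae_iff.2 rfl
  | @par σ τ _ _ _ _ ih₁ ih₂ =>
    exact ae_map_add_map (PrefixRes₂.measurableSet _ _) (ih₁.mono fun _ => .par_left τ)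
      (ih₂.mono fun _ => .par_right σ)
  | zero => exact ae_iff.2 rfl
  | _ => simp only [phagoMeas, exoMeas, coexoMeas, pinoMeas]; exact ae_iff.2 rfl

theorem ae_pino (h : MTrans ι σ ν) (n : Name) :
    ∀ᵐ (p : (MLabel.pino n).T) ∂ν (.pino n), PrefixRes₂ (.pino n) σ p := by
  induction h with
  | @pino m r s =>
    rcases eq_or_ne m n with rfl | hmn
    · simp only [pinoMeas, ↓reduceIte]
      exact ae_smul_dirac (PrefixRes₂.measurableSet _ _) (.of_prefix r s) _
    · simp only [pinoMeas, hmn]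
      exact ae_iff.2 rfl
  | @par σ τ _ _ _ _ ih₁ ih₂ =>
    exact ae_map_add_map (PrefixRes₂.measurableSet _ _) (ih₁.mono fun _ => .par_left τ)
      (ih₂.mono fun _ => .par_right σ)
  | zero => exact ae_iff.2 rfl
  | _ => simp only [phagoMeas, exoMeas, coexoMeas, cophagoMeas]; exact ae_iff.2 rfl

end MTrans

theorem SCong.comp_comp_left {P C R : System} (h : SCong P (C.comp R)) (Q : System) :
    SCong (P.comp Q) (C.comp (R.comp Q)) :=
  (h.comp Q).trans (SCong.compAssoc C R Q).symm

theorem SCong.comp_comp_right {P C R : System} (h : SCong P (C.comp R)) (Q : System) :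
    SCong (Q.comp P) (C.comp (R.comp Q)) :=
  (SCong.compComm Q P).trans (h.comp_comp_left Q)

section Residuals

/-! The residuals for the labels `ph n`, `phB n` and `ex n`: `P ≡ σ(|M|) ∘ R` where the top
membrane `σ` can act, and the components record what `σ` leaves (for `ph n`, the whole engulfed
cell), the contents `M` and the rest `R`. -/

def PhRes (n : Name) (P : System) (p : System × System) : Prop :=
  ∃ σ ρ M R, SCong P ((System.cell σ M).comp R) ∧ PrefixRes (.phago n) σ ρ ∧
    SCong p.1 (.cell ρ M) ∧ SCong p.2 R

def PhBRes (n : Name) (P : System) (q : Membrane × Membrane × System × System) : Prop :=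
  ∃ σ M R, SCong P ((System.cell σ M).comp R) ∧ PrefixRes₂ (.cophago n) σ (q.1, q.2.1) ∧
    SCong q.2.2.1 M ∧ SCong q.2.2.2 R

def ExRes (n : Name) (P : System) (q : Membrane × System × System) : Prop :=
  ∃ σ M R, SCong P ((System.cell σ M).comp R) ∧ PrefixRes (.exo n) σ q.1 ∧
    SCong q.2.1 M ∧ SCong q.2.2 R

variable {n : Name} {P Q : System}

theorem PhRes.comp_left (Q : System) {p : System × System} (h : PhRes n P p) :
    PhRes n (P.comp Q) (p.1, p.2.comp Q) :=
  let ⟨σ, ρ, M, R, hP, hσ, h₁, h₂⟩ := h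
  ⟨σ, ρ, M, R.comp Q, hP.comp_comp_left Q, hσ, h₁, h₂.comp Q⟩

theorem PhRes.comp_right (P : System) {p : System × System} (h : PhRes n Q p) :
    PhRes n (P.comp Q) (p.1, p.2.comp P) :=
  let ⟨σ, ρ, M, R, hQ, hσ, h₁, h₂⟩ := h
  ⟨σ, ρ, M, R.comp P, hQ.comp_comp_right P, hσ, h₁, h₂.comp P⟩

theorem PhRes.measurableSet (n : Name) (P : System) : MeasurableSet {p | PhRes n P p} :=
  measurableSet_setOf_of_saturated fun _ _ (h : SCong _ _ ∧ SCong _ _)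
      ⟨σ, ρ, M, R, hP, hσ, h₁, h₂⟩ =>
    ⟨σ, ρ, M, R, hP, hσ, h.1.symm.trans h₁, h.2.symm.trans h₂⟩

theorem PhBRes.comp_left (Q : System) {q : Membrane × Membrane × System × System}
    (h : PhBRes n P q) : PhBRes n (P.comp Q) (q.1, q.2.1, q.2.2.1, q.2.2.2.comp Q) :=
  let ⟨σ, M, R, hP, hσ, h₁, h₂⟩ := h
  ⟨σ, M, R.comp Q, hP.comp_comp_left Q, hσ, h₁, h₂.comp Q⟩

theorem PhBRes.comp_right (P : System) {q : Membrane × Membrane × System × System}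
    (h : PhBRes n Q q) : PhBRes n (P.comp Q) (q.1, q.2.1, q.2.2.1, q.2.2.2.comp P) :=
  let ⟨σ, M, R, hQ, hσ, h₁, h₂⟩ := h
  ⟨σ, M, R.comp P, hQ.comp_comp_right P, hσ, h₁, h₂.comp P⟩

theorem PhBRes.measurableSet (n : Name) (P : System) : MeasurableSet {q | PhBRes n P q} :=
  measurableSet_setOf_of_saturated fun _ _
      (h : MCong _ _ ∧ MCong _ _ ∧ SCong _ _ ∧ SCong _ _) ⟨σ, M, R, hP, ⟨r, hσ, hr⟩, h₁, h₂⟩ =>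
    ⟨σ, M, R, hP, ⟨r, hσ.congr_right h.1, h.2.1.symm.trans hr⟩, h.2.2.1.symm.trans h₁,
      h.2.2.2.symm.trans h₂⟩

theorem ExRes.comp_left (Q : System) {q : Membrane × System × System} (h : ExRes n P q) :
    ExRes n (P.comp Q) (q.1, q.2.1, q.2.2.comp Q) :=
  let ⟨σ, M, R, hP, hσ, h₁, h₂⟩ := h
  ⟨σ, M, R.comp Q, hP.comp_comp_left Q, hσ, h₁, h₂.comp Q⟩

theorem ExRes.comp_right (P : System) {q : Membrane × System × System} (h : ExRes n Q q) :
    ExRes n (P.comp Q) (q.1, q.2.1, q.2.2.comp P) :=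
  let ⟨σ, M, R, hQ, hσ, h₁, h₂⟩ := h
  ⟨σ, M, R.comp P, hQ.comp_comp_right P, hσ, h₁, h₂.comp P⟩

theorem ExRes.measurableSet (n : Name) (P : System) : MeasurableSet {q | ExRes n P q} :=
  measurableSet_setOf_of_saturated fun _ _ (h : MCong _ _ ∧ SCong _ _ ∧ SCong _ _)
      ⟨σ, M, R, hP, hσ, h₁, h₂⟩ =>
    ⟨σ, M, R, hP, hσ.congr_right h.1, h.2.1.symm.trans h₁, h.2.2.symm.trans h₂⟩

theorem measurableSet_setOf_react (P : System) : MeasurableSet {Q | React P Q} :=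
  measurableSet_setOf_of_saturated fun _ _ hQ h => React.equiv (.refl P) h hQ

theorem React.pino_of_res {σ : Membrane} {p : Membrane × Membrane}
    (h : PrefixRes₂ (.pino n) σ p) (P : System) :
    React (.cell σ P) (.cell p.1 ((System.cell p.2 .void).comp P)) :=
  let ⟨_, ⟨_, _, hσ, h₁⟩, h₂⟩ := h
  React.equiv (.cell hσ (.refl P)) .pino
    (.cell h₁.symm (.comp_congr (.cell h₂.symm (.refl _)) (.refl P)))

theorem React.exo_of_res {σ ρ : Membrane} {q : Membrane × System × System} (hP : ExRes n P q)
    (hσ : PrefixRes (.coexo n) σ ρ) :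
    React (.cell σ P) ((System.cell (q.1.par ρ) q.2.2).comp q.2.1) :=
  let ⟨_, M, R, hP, ⟨_, _, hτ, h₁⟩, h₂, h₃⟩ := hP
  let ⟨_, _, hσ, hρ⟩ := hσ
  React.equiv (.cell hσ (hP.trans ((SCong.cell hτ (.refl M)).comp R))) .exo
    (.comp_congr (.cell (h₁.par_congr hρ).symm h₃.symm) h₂.symm)

theorem React.phago_of_res {p : System × System} {q : Membrane × Membrane × System × System}
    (hP : PhRes n P p) (hQ : PhBRes n Q q) :
    React (P.comp Q) ((System.cell q.1 ((System.cell q.2.1 p.1).comp q.2.2.1)).comp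
      (p.2.comp q.2.2.2)) := by
  obtain ⟨_, _, M, R, hP, ⟨s, s₀, hσ, hρ⟩, hp₁, hp₂⟩ := hP
  obtain ⟨_, M', R', hQ, ⟨r, ⟨t, t₀, hτ, hq₁⟩, hq₂⟩, hq₃, hq₄⟩ := hQ
  have hsplit := (SCong.comp_congr hP hQ).trans (.comp_comp_comp_comm _ R _ R')
  refine React.equiv (hsplit.trans ?_) ((@React.phago n r t t₀ s s₀ M M').comp (R.comp R')) ?_
  · exact .comp_congr ((SCong.compComm _ _).trans
      (.comp_congr (.cell hτ (.refl M')) (.cell hσ (.refl M)))) (.refl _)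
  · exact .comp_congr (.cell hq₁.symm (.comp_congr
      (.cell hq₂.symm (hp₁.trans (.cell hρ (.refl M))).symm) hq₃.symm))
      (.comp_congr hp₂.symm hq₄.symm)

theorem React.phago_of_res_swap {p : System × System}
    {q : Membrane × Membrane × System × System} (hP : PhBRes n P q) (hQ : PhRes n Q p) :
    React (P.comp Q) ((System.cell q.1 ((System.cell q.2.1 p.1).comp q.2.2.1)).comp
      (q.2.2.2.comp p.2)) :=
  React.equiv (.compComm P Q) (React.phago_of_res hQ hP) (.comp_congr (.refl _) (.compComm _ _))

end Residuals

namespace STrans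

variable {ι : Name → ℝ≥0∞} {P : System} {μ : SMeas}

theorem ae_ph (h : STrans ι P μ) (n : Name) :
    ∀ᵐ (p : (SLabel.ph n).T) ∂μ (.ph n), PhRes n P p := by
  induction h with
  | void => exact ae_iff.2 rfl
  | @cell σ P ν _ hν _ _ =>
    simp only [mnest]
    by_cases hc : ν (.phago n) (mcls σ) = 0
    · rw [hc, zero_smul]
      exact ae_iff.2 rfl
    -- `mnest` weighs `ph n` by the mass of the class of `σ` itself, so `σ` is such a residual.
    obtain ⟨ρ, hσρ, hρ⟩ :=
      Measure.exists_mem_of_measure_ne_zero_of_ae hc (ae_restrict_of_ae (hν.ae_phago n))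
    exact ae_smul_dirac (PhRes.measurableSet n _)
      ⟨σ, σ, P, .void, (SCong.compVoid _).symm, hρ.congr_right (MCong.symm hσρ), .refl _,
        .refl _⟩ _
  | @comp P Q _ _ _ _ ih₁ ih₂ =>
    exact ae_map_add_map (PhRes.measurableSet n _) (ih₁.mono fun _ => .comp_left Q)
      (ih₂.mono fun _ => .comp_right P)

theorem ae_phB (h : STrans ι P μ) (n : Name) :
    ∀ᵐ (q : (SLabel.phB n).T) ∂μ (.phB n), PhBRes n P q := by
  induction h with
  | void => exact ae_iff.2 rfl
  | @cell σ P ν _ hν _ _ =>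
    refine ae_map_of_ae (PhBRes.measurableSet n _) ?_
    filter_upwards [ae_prod_of_ae_of_ae (hν.ae_cophago n) (ae_dirac_equiv (P, System.void))]
      with _ ⟨hσ, (hM : SCong _ _), (hR : SCong _ _)⟩
    exact ⟨σ, P, .void, (SCong.compVoid _).symm, hσ, hM.symm, hR.symm⟩
  | @comp P Q _ _ _ _ ih₁ ih₂ =>
    exact ae_map_add_map (PhBRes.measurableSet n _) (ih₁.mono fun _ => .comp_left Q)
      (ih₂.mono fun _ => .comp_right P)

theorem ae_ex (h : STrans ι P μ) (n : Name) :
    ∀ᵐ (q : (SLabel.ex n).T) ∂μ (.ex n), ExRes n P q := by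
  induction h with
  | void => exact ae_iff.2 rfl
  | @cell σ P ν _ hν _ _ =>
    filter_upwards [ae_prod_of_ae_of_ae (hν.ae_exo n) (ae_dirac_equiv (P, System.void))]
      with _ ⟨hσ, (hM : SCong _ _), (hR : SCong _ _)⟩
    exact ⟨σ, P, .void, (SCong.compVoid _).symm, hσ, hM.symm, hR.symm⟩
  | @comp P Q _ _ _ _ ih₁ ih₂ =>
    exact ae_map_add_map (ExRes.measurableSet n _) (ih₁.mono fun _ => .comp_left Q)
      (ih₂.mono fun _ => .comp_right P)

end STrans

section Reducts

variable {ι : Name → ℝ≥0∞}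

theorem ae_react_mnest {σ : Membrane} {P : System} {ν : MMeas} {μ : SMeas} (hν : MTrans ι σ ν)
    (hμ : STrans ι P μ) (ih : ∀ᵐ Q ∂μ .id, React P Q) :
    ∀ᵐ Q ∂mnest ι μ ν σ P .id, React (.cell σ P) Q := by
  have hR := measurableSet_setOf_react (.cell σ P)
  refine ae_add_measure_iff.2 ⟨ae_add_measure_iff.2 ⟨ae_map_of_ae hR (ih.mono fun _ => .loc σ),
    Measure.ae_sum_iff.2 fun n => ?_⟩, Measure.ae_sum_iff.2 fun n => ?_⟩
  · exact ae_map_of_ae hR ((hν.ae_pino n).mono fun _ h => .pino_of_res h P)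
  · refine Measure.ae_smul_measure (ae_map_of_ae hR ?_) _
    exact (ae_prod_of_ae_of_ae (hμ.ae_ex n) (hν.ae_coexo n)).mono fun _ h =>
      .exo_of_res h.1 h.2

theorem ae_react_mcomp {P Q : System} {μ μ' : SMeas} (hμ : STrans ι P μ) (hμ' : STrans ι Q μ')
    (ih : ∀ᵐ R ∂μ .id, React P R) (ih' : ∀ᵐ R ∂μ' .id, React Q R) :
    ∀ᵐ R ∂mcomp ι μ μ' P Q .id, React (P.comp Q) R := by
  have hR := measurableSet_setOf_react (P.comp Q)
  refine ae_add_measure_iff.2 ⟨ae_add_measure_iff.2 ⟨ae_map_add_map hR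
    (ih.mono fun _ => .comp Q) (ih'.mono fun _ h => .equiv (.compComm P Q) (h.comp P) (.refl _)),
    Measure.ae_sum_iff.2 fun n => ?_⟩, Measure.ae_sum_iff.2 fun n => ?_⟩
  · refine Measure.ae_smul_measure (ae_map_of_ae hR ?_) _
    exact (ae_prod_of_ae_of_ae (hμ.ae_ph n) (hμ'.ae_phB n)).mono fun _ h =>
      .phago_of_res h.1 h.2
  · refine Measure.ae_smul_measure (ae_map_of_ae hR ?_) _
    exact (ae_prod_of_ae_of_ae (hμ.ae_phB n) (hμ'.ae_ph n)).mono fun _ h =>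
      .phago_of_res_swap h.1 h.2

theorem STrans.ae_react {P : System} {μ : SMeas} (h : STrans ι P μ) :
    ∀ᵐ Q ∂μ .id, React P Q := by
  induction h with
  | void => exact ae_iff.2 rfl
  | cell hν hμ ih => exact ae_react_mnest hν hμ ih
  | comp hμ hμ' ih ih' => exact ae_react_mcomp hμ hμ' ih ih'

end Reducts

/-- the stochastic semantics is conservative w.r.t. the reduction
semantics: if P → μ and μ_id([Q]) > 0 then P ⟶ Q. -/
theorem stochastic_semantics_conservative (ι : Name → ℝ≥0∞)
    (hι : ∀ n : Name, 0 < ι n ∧ ι n ≠ ⊤) (P Q : System) (μ : SMeas)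
    (h : STrans ι P μ) (hpos : 0 < μ SLabel.id (scls Q)) : React P Q := by
  obtain ⟨Q', hQ', hPQ'⟩ :=
    Measure.exists_mem_of_measure_ne_zero_of_ae hpos.ne' (ae_restrict_of_ae h.ae_react)
  exact React.equiv (.refl P) hPQ' (SCong.symm hQ')

end Brane
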